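/- Let V be an n-dimensional complex vector space, let 0 → E → V → Q → 0 be an exact sequence with dim Q = r, and fix nonzero elements η_Q ∈ ⋀^r Q* and a volume form vol ∈ ⋀^n V* of the form vol = η ∧ μ, where η ∈ ⋀^r V* is the pullback of η_Q and μ ∈ ⋀^{n−r} V*. Then the linear map φ : Q → V defined as the composition q ↦ η_Q(q, ·) ∈ ⋀^{r−1} Q* ↦ its pullback in ⋀^{r−1} V* ↦ wedge with μ in ⋀^{n−1} V* ↦ the unique vector v with vol(v, ·) equal to that (n−1)-form, is a splitting of the sequence: the composition Q → V → Q is the identity. -/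

import Mathlib

/-!
Choose a basis `y` of `E = ker p` and lifts `x` of a basis of `Q`. Then `x ++ y` is a basis of `V`,
so `vol ≠ 0` forces `μ y ≠ 0`. For a form `α` on `Q`, when the last `m` arguments of `p^*α ∧ μ` lie
in `ker p` only the trivial shuffle survives in the wedge, so `(p^*α ∧ μ)(x' ++ y) = α(p ∘ x') μ(y)`. Evaluating the
defining identity of `v` on `x' ++ y` therefore gives `η_Q(p v, p ∘ x') = η_Q(q, p ∘ x')` for all
`x'`, that is `ι_{p v} η_Q = ι_q η_Q`, and contraction with a nonzero top-degree form is injective.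
-/

open scoped TensorProduct

/-- The wedge product of ℂ-valued alternating forms, via `AlternatingMap.domCoprod`. -/
noncomputable def wedge {V : Type*} [AddCommGroup V] [Module ℂ V] {a b : ℕ}
    (α : V [⋀^Fin a]→ₗ[ℂ] ℂ) (β : V [⋀^Fin b]→ₗ[ℂ] ℂ) :
    V [⋀^Fin (a + b)]→ₗ[ℂ] ℂ :=
  (((TensorProduct.lid ℂ ℂ).toLinearMap).compAlternatingMap
      (α.domCoprod β)).domDomCongr finSumFinEquiv

open Function

theorem Module.Basis.det_update_self {R M ι : Type*} [CommRing R] [AddCommGroup M] [Module R M]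
    [Fintype ι] [DecidableEq ι] (e : Module.Basis ι R M) (i : ι) (u : M) :
    e.det (update e i u) = e.repr u i := by
  rw [e.det_apply, e.toMatrix_update, e.toMatrix_self, ← Matrix.cramer_apply, Matrix.cramer_one]
  rfl

theorem AlternatingMap.map_eq_zero_of_curryLeft_eq_zero {R M N : Type*} [CommRing R]
    [AddCommGroup M] [Module R M] [AddCommGroup N] [Module R N] {n : ℕ}
    {f : M [⋀^Fin (n + 1)]→ₗ[R] N} {u : M} (hu : f.curryLeft u = 0) {v : Fin (n + 1) → M}
    {i : Fin (n + 1)} (hi : v i = u) : f v = 0 := by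
  have hperm := f.map_perm v (Equiv.swap 0 i)
  rw [← Fin.cons_self_tail (v ∘ Equiv.swap 0 i), comp_apply, Equiv.swap_apply_left, hi] at hperm
  rw [← smul_eq_zero_iff_eq (Equiv.Perm.sign (Equiv.swap 0 i)), ← hperm]
  exact DFunLike.congr_fun hu _

theorem AlternatingMap.curryLeft_injective {K M : Type*} [Field K] [AddCommGroup M] [Module K M]
    {n : ℕ} (hM : Module.finrank K M = n + 1) {f : M [⋀^Fin (n + 1)]→ₗ[K] K} (hf : f ≠ 0) :
    Injective f.curryLeft := by
  have : FiniteDimensional K M := Module.finite_of_finrank_eq_succ hM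
  classical
  let e := Module.finBasisOfFinrankEq K M hM
  have hfe : f e ≠ 0 := (f.map_basis_ne_zero_iff e).2 hf
  rw [← LinearMap.ker_eq_bot, LinearMap.ker_eq_bot']
  intro u hu
  refine e.repr.injective (Finsupp.ext fun i => ?_)
  have hupdate : f (update e i u) = f e * e.repr u i := by
    conv_lhs => rw [f.eq_smul_basis_det e]
    rw [AlternatingMap.smul_apply, e.det_update_self, smul_eq_mul]
  rw [f.map_eq_zero_of_curryLeft_eq_zero hu (update_self i u e)] at hupdate
  rw [e.repr.map_zero, Finsupp.zero_apply]
  exact (mul_eq_zero.1 hupdate.symm).resolve_left hfe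

theorem LinearIndependent.fin_append_of_comp_of_mem_ker {R M N : Type*} [Ring R] [AddCommGroup M]
    [Module R M] [AddCommGroup N] [Module R N] {a b : ℕ} {p : M →ₗ[R] N} {x : Fin a → M}
    {y : Fin b → M} (hx : LinearIndependent R (p ∘ x)) (hy : LinearIndependent R y)
    (hker : ∀ j, y j ∈ LinearMap.ker p) : LinearIndependent R (Fin.append x y) := by
  have hsum : LinearIndependent R (Sum.elim x y) := by
    refine linearIndependent_sum.2 ⟨hx.of_comp p, hy, ?_⟩
    refine (Submodule.range_ker_disjoint hx).mono_right (Submodule.span_le.2 ?_)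
    rintro _ ⟨j, rfl⟩
    exact hker j
  convert hsum.comp _ finSumFinEquiv.symm.injective using 1
  ext i
  refine Fin.addCases (fun i => ?_) (fun j => ?_) i <;> simp

theorem wedge_compLinearMap_append_of_mem_ker {V Q : Type*} [AddCommGroup V] [Module ℂ V]
    [AddCommGroup Q] [Module ℂ Q] {a b : ℕ} {α : Q [⋀^Fin a]→ₗ[ℂ] ℂ} {β : V [⋀^Fin b]→ₗ[ℂ] ℂ}
    {p : V →ₗ[ℂ] Q} {x : Fin a → V} {y : Fin b → V} (hy : ∀ j, y j ∈ LinearMap.ker p) :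
    wedge (α.compLinearMap p) β (Fin.append x y) = α (p ∘ x) * β y := by
  classical
  have happend : Fin.append x y ∘ finSumFinEquiv = Sum.elim x y := by
    ext (i | j) <;> simp
  rw [wedge, AlternatingMap.domDomCongr_apply, LinearMap.compAlternatingMap_apply,
    AlternatingMap.domCoprod_apply, happend, _root_.sum_apply, map_sum]
  refine (Finset.sum_eq_single (Quotient.mk'' 1) ?_ (by simp)).trans ?_
  · rintro ⟨σ⟩ - hσ
    -- a shuffle outside the identity coset sends some slot of the first block into the second,
    -- where `α ∘ p` is fed a vector of `ker p`
    obtain ⟨i, j, hij⟩ : ∃ i j, σ (Sum.inl i) = Sum.inr j := by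
      by_contra! h
      have hmaps : Set.MapsTo σ (Set.range Sum.inl) (Set.range Sum.inl) := by
        rintro _ ⟨i, rfl⟩
        rcases hi : σ (Sum.inl i) with k | j
        exacts [⟨k, rfl⟩, absurd hi (h i j)]
      obtain ⟨τ, hτ⟩ := Equiv.Perm.mem_sumCongrHom_range_of_perm_mapsTo_inl hmaps
      exact hσ (Quotient.sound' (QuotientGroup.leftRel_apply.2 ⟨τ⁻¹, by rw [map_inv, hτ, mul_one]⟩))
    have hzero : α (fun k => p (Sum.elim x y (σ (Sum.inl k)))) = 0 :=
      α.map_coord_zero i (by rw [hij]; exact hy j)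
    change TensorProduct.lid ℂ ℂ
      (AlternatingMap.domCoprod.summand (α.compLinearMap p) β (Quotient.mk'' σ) (Sum.elim x y)) = 0
    rw [AlternatingMap.domCoprod.summand_mk'']
    simp [hzero]
  · simp [AlternatingMap.domCoprod.summand_mk'', comp_def]

theorem exists_mem_ker_ne_zero_of_wedge_compLinearMap_ne_zero {V Q : Type*} [AddCommGroup V]
    [Module ℂ V] [FiniteDimensional ℂ V] [AddCommGroup Q] [Module ℂ Q] {a m : ℕ}
    (hV : Module.finrank ℂ V = a + m) (hQ : Module.finrank ℂ Q = a) {p : V →ₗ[ℂ] Q}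
    (hp : Surjective p) (α : Q [⋀^Fin a]→ₗ[ℂ] ℂ) (β : V [⋀^Fin m]→ₗ[ℂ] ℂ)
    (h : wedge (α.compLinearMap p) β ≠ 0) :
    ∃ y : Fin m → V, (∀ j, y j ∈ LinearMap.ker p) ∧ β y ≠ 0 := by
  have : FiniteDimensional ℂ Q := Module.Finite.of_surjective p hp
  let bQ := Module.finBasisOfFinrankEq ℂ Q hQ
  obtain ⟨x, hx⟩ : ∃ x : Fin a → V, p ∘ x = bQ := hp.comp_left bQ
  have hker : Module.finrank ℂ (LinearMap.ker p) = m := by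
    have := LinearMap.finrank_range_add_finrank_ker p
    rw [LinearMap.range_eq_top.2 hp, finrank_top] at this
    omega
  obtain ⟨bE⟩ : Nonempty (Module.Basis (Fin m) ℂ (LinearMap.ker p)) :=
    ⟨Module.finBasisOfFinrankEq ℂ _ hker⟩
  let y : Fin m → V := fun j => bE j
  have hy : ∀ j, y j ∈ LinearMap.ker p := fun j => (bE j).2
  have hli : LinearIndependent ℂ (Fin.append x y) :=
    .fin_append_of_comp_of_mem_ker (by rw [hx]; exact bQ.linearIndependent)
      (bE.linearIndependent.map' _ (Submodule.ker_subtype _)) hy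
  let b := basisOfLinearIndependentOfCardEqFinrank' _ hli (by simp [hV])
  refine ⟨y, hy, fun hβ => h ?_⟩
  rw [← (wedge (α.compLinearMap p) β).map_basis_eq_zero_iff b,
    coe_basisOfLinearIndependentOfCardEqFinrank', wedge_compLinearMap_append_of_mem_ker hy,
    hβ, mul_zero]

/-- Let `V` be an `n`-dimensional complex vector space, let
`0 → E → V → Q → 0` be exact (`E = ker p`, `p : V → Q` surjective) with `dim Q = r = s + 1`,
and fix a nonzero `η_Q ∈ ⋀^r Q*` and a volume form `vol = η ∧ μ ∈ ⋀^n V*` where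
`η = p^* η_Q` and `μ ∈ ⋀^{n-r} V*`.  Then the map `φ : Q → V` defined by
`q ↦ η_Q(q,·) ↦ p^*(η_Q(q,·)) ↦ p^*(η_Q(q,·)) ∧ μ ↦ the unique v with vol(v,·) = that form`
is a splitting of the sequence: `p ∘ φ = id`.  We state this as: whenever `v ∈ V` satisfies
the defining equation `vol(v, ·) = p^*(η_Q(q, ·)) ∧ μ`, then `p v = q`. -/
theorem stmt_9 (V Q : Type*) [AddCommGroup V] [Module ℂ V] [FiniteDimensional ℂ V]
    [AddCommGroup Q] [Module ℂ Q]
    (s m : ℕ)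
    (hdim : Module.finrank ℂ V = s + 1 + m)
    (hQ : Module.finrank ℂ Q = s + 1)
    (p : V →ₗ[ℂ] Q) (hp : Function.Surjective p)
    (ηQ : Q [⋀^Fin (s + 1)]→ₗ[ℂ] ℂ) (hηQ : ηQ ≠ 0)
    (μ : V [⋀^Fin m]→ₗ[ℂ] ℂ)
    (hvol : wedge (ηQ.compLinearMap p) μ ≠ 0) :
    ∀ (q : Q) (v : V),
      (∀ w : Fin (s + m) → V,
          ((wedge (ηQ.compLinearMap p) μ).domDomCongr
              (finCongr (by omega : s + 1 + m = s + m + 1))) (Fin.cons v w) =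
            wedge ((ηQ.curryLeft q).compLinearMap p) μ w) →
      p v = q := by
  intro q v hv
  obtain ⟨y, hy, hμy⟩ :=
    exists_mem_ker_ne_zero_of_wedge_compLinearMap_ne_zero hdim hQ hp ηQ μ hvol
  refine ηQ.curryLeft_injective hQ hηQ (AlternatingMap.ext fun z => ?_)
  obtain ⟨x, rfl⟩ := hp.comp_left z
  have hcons : Fin.cons v (Fin.append x y) ∘ finCongr (by omega : s + 1 + m = s + m + 1) =
      Fin.append (Fin.cons v x) y :=
    (Fin.append_cons v x y).symm
  have key := hv (Fin.append x y)
  rw [AlternatingMap.domDomCongr_apply, hcons, wedge_compLinearMap_append_of_mem_ker hy,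
    wedge_compLinearMap_append_of_mem_ker hy, Fin.comp_cons] at key
  exact mul_right_cancel₀ hμy key
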